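/- Let Q be a hyperbolic or parabolic quadric in P^n(K), n ≥ 3, and let S be a projective subspace of P^n(K) of dimension n−2. Then some line entirely contained in Q does not intersect S. -/
import Mathlib


/-!
Formalization of definitions from "On the varieties of the second row of the
split Freudenthal-Tits Magic Square" by Schillewaert and Van Maldeghem.

Points of the projective space `P(V)` are elements of `ℙ K V`; projective
subspaces are represented by linear subspaces (`Submodule K V`), so a projective
`k`-space corresponds to a submodule of linear dimension `k + 1`.
-/

open scoped LinearAlgebra.Projectivization
open Projectivization Module

namespace MMset

variable {K : Type*} [Field K] {V : Type*} [AddCommGroup V] [Module K V]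

/-- The set of projective points lying in a linear subspace `W ≤ V`. -/
def projPts (W : Submodule K V) : Set (ℙ K V) := {x | x.rep ∈ W}

/-- The projective line through two points, as a linear subspace of `V`. -/
def lineThrough (x y : ℙ K V) : Submodule K V := Submodule.span K {x.rep, y.rep}

/-- A subspace is singular (w.r.t. the point set `X`) if all its points belong to `X`. -/
def IsSingular (X : Set (ℙ K V)) (W : Submodule K V) : Prop := projPts W ⊆ X

/-- A singular line: a projective line (2-dimensional linear subspace) all of
whose points belong to `X`. -/
def IsSingularLine (X : Set (ℙ K V)) (W : Submodule K V) : Prop :=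
  Module.finrank K ↥W = 2 ∧ projPts W ⊆ X

/-- Two points of `X` are `X`-collinear if they lie on a common singular line. -/
def XCollinear (X : Set (ℙ K V)) (x y : ℙ K V) : Prop :=
  x ∈ X ∧ y ∈ X ∧ ∃ L : Submodule K V, IsSingularLine X L ∧ x.rep ∈ L ∧ y.rep ∈ L

/-- `S` is the point set of a non-singular split quadric in the subspace `W`:
there is a quadratic form `Q` on `W` which is non-singular (no nonzero singular
vector of the quadric lies in the radical of the polar form) and of maximal Witt
index (it admits a totally singular subspace of linear dimension `⌊dim W / 2⌋`),
whose projective zero locus is exactly `S`.  (For `dim W = d + 2` this is the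
hyperbolic quadric if `d` is even and the parabolic quadric if `d` is odd.) -/
def IsSplitQuadric (W : Submodule K V) (S : Set (ℙ K V)) : Prop :=
  ∃ Q : QuadraticForm K ↥W,
    (∀ v : ↥W, Q v = 0 → (∀ w : ↥W, QuadraticMap.polar Q v w = 0) → v = 0) ∧
    (∃ U : Submodule K ↥W, (∀ u ∈ U, Q u = 0) ∧
        Module.finrank K ↥U = Module.finrank K ↥W / 2) ∧
    S = {x : ℙ K V | ∃ h : x.rep ∈ W, Q ⟨x.rep, h⟩ = 0}

/-- The (projective) tangent set at `x` to the quadric `X ∩ ξ`: the points `y` of `ξ`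
such that `y = x`, or the line `⟨x,y⟩` meets `X` only in `x`, or the line `⟨x,y⟩`
is entirely contained in `X`. -/
def tangentSet (X : Set (ℙ K V)) (ξ : Submodule K V) (x : ℙ K V) : Set (ℙ K V) :=
  {y | y.rep ∈ ξ ∧ (y = x ∨
     (∀ z : ℙ K V, z.rep ∈ lineThrough x y → z ∈ X → z = x) ∨
     projPts (lineThrough x y) ⊆ X)}

/-- The tangent space `T_x(ξ)`, as a linear subspace of `V`. -/
def tangentSub (X : Set (ℙ K V)) (ξ : Submodule K V) (x : ℙ K V) : Submodule K V :=
  Submodule.span K (Projectivization.rep '' tangentSet X ξ x)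

/-- The space `T_x` generated by all the tangent spaces `T_x(ξ)`, `x ∈ ξ ∈ Ξ`. -/
def Tspace (X : Set (ℙ K V)) (Xi : Set (Submodule K V)) (x : ℙ K V) : Submodule K V :=
  Submodule.span K (Projectivization.rep '' ⋃ ξ ∈ {ξ ∈ Xi | x.rep ∈ ξ}, tangentSet X ξ x)

/-- A pre-Mazzocca-Melone set of split type `d` with ambient (sub)space `W`:
`X` spans `W`, every `ξ ∈ Ξ` is a `(d+1)`-dimensional projective subspace of `W`
meeting `X` in a non-singular split quadric (a symp), and axioms (MM1) and (MM2)
hold. -/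
structure IsPreMM (d : ℕ) (W : Submodule K V) (X : Set (ℙ K V))
    (Xi : Set (Submodule K V)) : Prop where
  spans : Submodule.span K (Projectivization.rep '' X) = W
  xi_le : ∀ ξ ∈ Xi, ξ ≤ W
  xi_rank : ∀ ξ ∈ Xi, Module.finrank K ↥ξ = d + 2
  xi_quadric : ∀ ξ ∈ Xi, IsSplitQuadric ξ (X ∩ projPts ξ)
  mm1 : ∀ x ∈ X, ∀ y ∈ X, ∃ ξ ∈ Xi, x.rep ∈ ξ ∧ y.rep ∈ ξ
  mm2 : ∀ ξ₁ ∈ Xi, ∀ ξ₂ ∈ Xi, ξ₁ ≠ ξ₂ → projPts (ξ₁ ⊓ ξ₂) ⊆ X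

/-- A Mazzocca-Melone set of split type `d`: a pre-Mazzocca-Melone set which
moreover satisfies (MM3): for every `x ∈ X` the space `T_x` has projective
dimension at most `2d` (i.e. linear dimension at most `2d + 1`). -/
structure IsMM (d : ℕ) (W : Submodule K V) (X : Set (ℙ K V))
    (Xi : Set (Submodule K V)) extends IsPreMM d W X Xi : Prop where
  mm3 : ∀ x ∈ X, Module.rank K ↥(Tspace X Xi x) ≤ (2 * d + 1 : ℕ)

/-- The point set `X_p` of the residue at `p`, w.r.t. a hyperplane `C` of `T_p` not
containing `p`: the points of `C` lying on a singular line of `X` through `p`. -/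
def residuePts (X : Set (ℙ K V)) (p : ℙ K V) (C : Submodule K V) : Set (ℙ K V) :=
  {y | y.rep ∈ C ∧ IsSingularLine X (lineThrough p y)}

/-- The family `Ξ_p` of the residue at `p`: the subspaces `C ∩ T_p(ξ)`, `p ∈ ξ ∈ Ξ`. -/
def residueXi (X : Set (ℙ K V)) (Xi : Set (Submodule K V)) (p : ℙ K V)
    (C : Submodule K V) : Set (Submodule K V) :=
  {W | ∃ ξ ∈ Xi, p.rep ∈ ξ ∧ W = C ⊓ tangentSub X ξ p}

/-- The point set `X ⊆ ℙ(V)` is projectively equivalent to `Y ⊆ ℙ(V')`: there is a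
linear map `V → V'` injective on the span of `X` carrying `X` exactly onto `Y`. -/
def ProjEquivalent {V' : Type*} [AddCommGroup V'] [Module K V']
    (X : Set (ℙ K V)) (Y : Set (ℙ K V')) : Prop :=
  ∃ f : V →ₗ[K] V',
    Set.InjOn f (Submodule.span K (Projectivization.rep '' X) : Submodule K V) ∧
    Y = {q : ℙ K V' | ∃ x ∈ X, ∃ hq : f x.rep ≠ 0, q = Projectivization.mk K (f x.rep) hq}

end MMset

namespace MMset

variable (K : Type*) [Field K]

/-- The quadric Veronese variety `𝒱₂(K) ⊆ ℙ⁵(K)`: the image of `ℙ²(K)` under the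
Veronese map. -/
noncomputable def veroneseVariety : Set (ℙ K (Fin 6 → K)) :=
  {p | ∃ (x : Fin 3 → K) (c : K),
    p.rep = c • ![x 0 * x 0, x 1 * x 1, x 2 * x 2, x 0 * x 1, x 0 * x 2, x 1 * x 2]}

/-- The Segre variety `𝒮_{k,ℓ}(K) ⊆ ℙ^{kℓ+k+ℓ}(K)`: the image of
`ℙ^k(K) × ℙ^ℓ(K)` under the Segre map. -/
noncomputable def segreVariety (k l : ℕ) : Set (ℙ K (Fin (k + 1) × Fin (l + 1) → K)) :=
  {p | ∃ (x : Fin (k + 1) → K) (y : Fin (l + 1) → K) (c : K),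
    p.rep = c • fun ij => x ij.1 * y ij.2}

/-- The line Grassmannian variety `𝒢_{m,1}(K) ⊆ ℙ^{(m²+m-2)/2}(K)`: the image of
the set of lines of `ℙ^m(K)` under the Plücker map. -/
noncomputable def grassmannVariety (m : ℕ) :
    Set (ℙ K ({ij : Fin (m + 1) × Fin (m + 1) // ij.1 < ij.2} → K)) :=
  {p | ∃ (x y : Fin (m + 1) → K) (c : K),
    p.rep = c • fun ij => x ij.1.1 * y ij.1.2 - x ij.1.2 * y ij.1.1}

/-- The standard hyperbolic quadratic form `x₀x₁ + ⋯ + x_{2m-2}x_{2m-1}` on `K^{2m}`. -/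
def hypForm (m : ℕ) (x : Fin (2 * m) → K) : K :=
  ∑ i : Fin m, x ⟨2 * i.1, by omega⟩ * x ⟨2 * i.1 + 1, by omega⟩

/-- The hyperbolic quadric in `ℙ^{2m-1}(K)` (the variety `𝒟_{m,1}(K)`). -/
noncomputable def hypQuadric (m : ℕ) : Set (ℙ K (Fin (2 * m) → K)) :=
  {p | hypForm K m p.rep = 0}

/-- The standard parabolic quadratic form `x₀² + x₁x₂ + ⋯ + x_{2m-1}x_{2m}` on
`K^{2m+1}`. -/
def parForm (m : ℕ) (x : Fin (2 * m + 1) → K) : K :=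
  x 0 * x 0 + ∑ i : Fin m, x ⟨2 * i.1 + 1, by omega⟩ * x ⟨2 * i.1 + 2, by omega⟩

/-- The parabolic quadric in `ℙ^{2m}(K)` (the variety `ℬ_{m,1}(K)`). -/
noncomputable def parQuadric (m : ℕ) : Set (ℙ K (Fin (2 * m + 1) → K)) :=
  {p | parForm K m p.rep = 0}

/-- The half-spinor space of `D_n`: the even part `⋀^{even} U_∞` of the exterior
algebra of an `n`-dimensional space `U_∞` (a maximal singular subspace of the
hyperbolic quadric in `ℙ^{2n-1}(K)`). -/
noncomputable def halfSpinorSpace (n : ℕ) : Submodule K (ExteriorAlgebra K (Fin n → K)) :=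
  ⨆ i : ℕ, ⋀[K]^(2 * i) (Fin n → K)

/-- The Clifford action `φ_u`, for `u = (u₀, u_∞) ∈ U₀ ⊕ U_∞` (with `U₀ ≅ (U_∞)^*`),
on the spinor space `⋀ U_∞`: contraction by `u₀` plus (left) wedge multiplication
by `u_∞`. -/
noncomputable def cliffordAction {n : ℕ} (u : Module.Dual K (Fin n → K) × (Fin n → K))
    (s : ExteriorAlgebra K (Fin n → K)) : ExteriorAlgebra K (Fin n → K) :=
  CliffordAlgebra.contractLeft (Q := (0 : QuadraticForm K (Fin n → K))) u.1 s +
    ExteriorAlgebra.ι K u.2 * s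

/-- The annihilator of a spinor `s`: the subspace of `U₀ ⊕ U_∞ ≅ K^{2n}` consisting
of all `u` with `φ_u(s) = 0`; it is always a singular subspace for the hyperbolic
form `q(u₀, u_∞) = u₀(u_∞)` on `U₀ ⊕ U_∞`. -/
noncomputable def spinorAnnihilator {n : ℕ} (s : ExteriorAlgebra K (Fin n → K)) :
    Submodule K (Module.Dual K (Fin n → K) × (Fin n → K)) where
  carrier := {u | cliffordAction K u s = 0}
  add_mem' := by
    intro a b ha hb
    simp only [Set.mem_setOf_eq, cliffordAction] at *
    rw [Prod.fst_add, Prod.snd_add, map_add, map_add, LinearMap.add_apply, add_mul]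
    rw [show ∀ x y z w : ExteriorAlgebra K (Fin n → K),
      x + y + (z + w) = (x + z) + (y + w) from by intros; abel]
    rw [ha, hb, add_zero]
  zero_mem' := by
    simp [cliffordAction]
  smul_mem' := by
    intro c a ha
    simp only [Set.mem_setOf_eq, cliffordAction] at *
    rw [Prod.smul_fst, Prod.smul_snd, map_smul, map_smul, LinearMap.smul_apply, smul_mul_assoc,
      ← smul_add, ha, smul_zero]

/-- The half-spin variety `𝒟_{n,n}(K) ⊆ ℙ^{2^{n-1}-1}(K)`: the points of the
half-spinor space represented by pure spinors, i.e. spinors `s_U` whose annihilator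
is a maximal singular subspace `U` (of linear dimension `n`) of the hyperbolic
quadric on `K^{2n}`. -/
noncomputable def halfSpinVariety (n : ℕ) : Set (ℙ K ↥(halfSpinorSpace K n)) :=
  {p | Module.finrank K
        ↥(spinorAnnihilator K ((p.rep : ExteriorAlgebra K (Fin n → K)))) = n}

/-- The cubic form `d(x) = det x⁽¹⁾ + det x⁽²⁾ + det x⁽³⁾ − Tr(x⁽¹⁾x⁽²⁾x⁽³⁾)` on the
`27`-dimensional space of triples of `3×3` matrices (over any commutative ring). -/
def e6CubicForm {R : Type*} [CommRing R] (x : Fin 3 → Matrix (Fin 3) (Fin 3) R) : R :=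
  (x 0).det + (x 1).det + (x 2).det - (x 0 * x 1 * x 2).trace

/-- The derivative `∂_x d(y)` of the cubic form `d` at `x`: the coefficient of `t`
in the expansion of `d(x + t·y)`. -/
noncomputable def e6Deriv (x y : Fin 3 → Matrix (Fin 3) (Fin 3) K) : K :=
  (e6CubicForm (fun i =>
    (x i).map Polynomial.C + (Polynomial.X : Polynomial K) • (y i).map Polynomial.C)).coeff 1

/-- The variety `ℰ_{6,1}(K) ⊆ ℙ^{26}(K)`: the points `⟨x⟩` with `x^♯ = 0`, where the
adjoint square `x^♯` is defined by `∂_x d(y) = Tr(x^♯ y)`; since the trace pairing is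
non-degenerate, `x^♯ = 0` holds if and only if `∂_x d(y) = 0` for all `y`. -/
noncomputable def e6Variety : Set (ℙ K (Fin 3 → Matrix (Fin 3) (Fin 3) K)) :=
  {p | ∀ y, e6Deriv K p.rep y = 0}

end MMset


namespace MMsetAux

variable {K : Type*} [Field K]

def dotP {m : ℕ} (x y : Fin m → K) : K := ∑ i, x i * y i

lemma dotP_comm {m : ℕ} (x y : Fin m → K) : dotP x y = dotP y x :=
  Finset.sum_congr rfl fun i _ => mul_comm _ _

lemma dotP_zero_right {m : ℕ} (x : Fin m → K) : dotP x 0 = 0 := by simp [dotP]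

lemma dotP_zero_left {m : ℕ} (y : Fin m → K) : dotP 0 y = 0 := by simp [dotP]

lemma dotP_sub_right {m : ℕ} (x y z : Fin m → K) : dotP x (y - z) = dotP x y - dotP x z := by
  simp [dotP, mul_sub, Finset.sum_sub_distrib]

lemma dotP_sub_left {m : ℕ} (x y z : Fin m → K) : dotP (x - y) z = dotP x z - dotP y z := by
  simp [dotP, sub_mul, Finset.sum_sub_distrib]

lemma dotP_smul_right {m : ℕ} (c : K) (x y : Fin m → K) : dotP x (c • y) = c * dotP x y := by
  simp [dotP, Finset.mul_sum]; exact Finset.sum_congr rfl fun i _ => by ring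

lemma dotP_smul_left {m : ℕ} (c : K) (x y : Fin m → K) : dotP (c • x) y = c * dotP x y := by
  simp [dotP, Finset.mul_sum]; exact Finset.sum_congr rfl fun i _ => by ring

lemma dotP_add_left {m : ℕ} (x y z : Fin m → K) : dotP (x + y) z = dotP x z + dotP y z := by
  simp [dotP, add_mul, Finset.sum_add_distrib]

lemma dotP_single_left {m : ℕ} (j : Fin m) (c : K) (y : Fin m → K) :
    dotP (Pi.single j c) y = c * y j := by
  simp [dotP, Pi.single_apply, ite_mul, Finset.sum_ite_eq]

lemma dotP_single_right {m : ℕ} (j : Fin m) (c : K) (x : Fin m → K) :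
    dotP x (Pi.single j c) = x j * c := by
  rw [dotP_comm, dotP_single_left]; ring

lemma dotP_expand {m : ℕ} (a b c d : K) (x x' y y' : Fin m → K) :
    dotP (a • x + b • x') (c • y + d • y') =
      a*c*dotP x y + a*d*dotP x y' + b*c*dotP x' y + b*d*dotP x' y' := by
  unfold dotP
  simp only [Finset.mul_sum, ← Finset.sum_add_distrib, Pi.add_apply, Pi.smul_apply, smul_eq_mul]
  exact Finset.sum_congr rfl fun i _ => by ring

def epsd (p q : Fin 2 → K) : K := p 0 * q 1 - p 1 * q 0

lemma epsd_self (p : Fin 2 → K) : epsd p p = 0 := by unfold epsd; ring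

lemma epsd_zero_right (p : Fin 2 → K) : epsd p 0 = 0 := by simp [epsd]

lemma epsd_swap (p q : Fin 2 → K) : epsd p q = - epsd q p := by unfold epsd; ring

lemma epsd_add_right (p q r : Fin 2 → K) : epsd p (q + r) = epsd p q + epsd p r := by
  simp [epsd]; ring

lemma epsd_add_left (p q r : Fin 2 → K) : epsd (p + q) r = epsd p r + epsd q r := by
  simp [epsd]; ring

lemma epsd_smul_right (c : K) (p q : Fin 2 → K) : epsd p (c • q) = c * epsd p q := by
  simp [epsd]; ring

lemma epsd_smul_left (c : K) (p q : Fin 2 → K) : epsd (c • p) q = c * epsd p q := by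
  simp [epsd]; ring

lemma epsd_all_zero {p : Fin 2 → K} (h : ∀ t, epsd p t = 0) : p = 0 := by
  have h0 := h (Pi.single 1 1)
  have h1 := h (Pi.single 0 1)
  simp [epsd, Pi.single_apply] at h0 h1
  funext i
  fin_cases i
  · simpa using h0
  · simpa using h1

lemma epsd_basis_ne : epsd (K := K) (Pi.single 0 1) (Pi.single 1 1) ≠ 0 := by
  simp [epsd, Pi.single_apply]

lemma indep_of_epsd {p q : Fin 2 → K} (h : epsd p q ≠ 0) :
    ∀ a b : K, a • p + b • q = 0 → a = 0 ∧ b = 0 := by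
  intro a b hab
  have h0 := congrFun hab 0
  have h1 := congrFun hab 1
  simp only [Pi.add_apply, Pi.smul_apply, smul_eq_mul, Pi.zero_apply] at h0 h1
  constructor
  · have ha : a * epsd p q = 0 := by unfold epsd; linear_combination q 1 * h0 - q 0 * h1
    exact (mul_eq_zero.mp ha).resolve_right h
  · have hb : b * epsd p q = 0 := by unfold epsd; linear_combination p 0 * h1 - p 1 * h0
    exact (mul_eq_zero.mp hb).resolve_right h

lemma exists_scalar {p q : Fin 2 → K} (hp : p ≠ 0) (h : epsd p q = 0) : ∃ c : K, q = c • p := by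
  unfold epsd at h
  by_cases h0 : p 0 = 0
  · have h1 : p 1 ≠ 0 := by
      intro h1; apply hp; funext i; fin_cases i <;> simp [h0, h1]
    refine ⟨q 1 / p 1, ?_⟩
    funext i; fin_cases i
    · show q 0 = q 1 / p 1 * p 0
      have h' : p 1 * q 0 = 0 := by linear_combination q 1 * h0 - h
      have hq0 : q 0 = 0 := (mul_eq_zero.mp h').resolve_left h1
      rw [hq0, h0]; ring
    · show q 1 = q 1 / p 1 * p 1
      field_simp
  · refine ⟨q 0 / p 0, ?_⟩
    funext i; fin_cases i
    · show q 0 = q 0 / p 0 * p 0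
      field_simp
    · show q 1 = q 0 / p 0 * p 1
      rw [div_mul_eq_mul_div, eq_div_iff h0]
      linear_combination h


lemma exists_dotP_eq {m : ℕ} {ξ : Fin m → K} (hξ : ξ ≠ 0) (c : K) : ∃ u, dotP u ξ = c := by
  obtain ⟨i, hi⟩ := Function.ne_iff.mp hξ
  simp only [Pi.zero_apply] at hi
  refine ⟨Pi.single i (c / ξ i), ?_⟩
  rw [dotP_single_left]
  exact div_mul_cancel₀ c hi

lemma exists_ne_index {m : ℕ} (hm : 2 ≤ m) (i : Fin m) : ∃ j : Fin m, j ≠ i := by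
  by_cases h0 : i.1 = 0
  · exact ⟨⟨1, by omega⟩, fun h => by rw [Fin.ext_iff] at h; simp at h; omega⟩
  · exact ⟨⟨0, by omega⟩, fun h => by rw [Fin.ext_iff] at h; simp at h; omega⟩

lemma exists_perp {m : ℕ} (hm : 2 ≤ m) (v : Fin m → K) : ∃ ξ, ξ ≠ 0 ∧ dotP v ξ = 0 := by
  by_cases hv : v = 0
  · refine ⟨Pi.single ⟨0, by omega⟩ 1, ?_, by rw [hv, dotP_zero_left]⟩
    intro h
    have := congrFun h ⟨0, by omega⟩
    simp [Pi.single_eq_same] at this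
  · obtain ⟨i, hi⟩ := Function.ne_iff.mp hv
    simp only [Pi.zero_apply] at hi
    obtain ⟨j, hji⟩ := exists_ne_index hm i
    refine ⟨Pi.single j (v i) - Pi.single i (v j), ?_, ?_⟩
    · intro h
      have := congrFun h j
      simp [Pi.single_eq_same, Pi.single_eq_of_ne hji] at this
      exact hi this
    · rw [dotP_sub_right, dotP_single_right, dotP_single_right]; ring

lemma perp_and_ne {m : ℕ} (x a : Fin m → K) (h : ∀ c : K, a ≠ c • x) :
    ∃ y, dotP x y = 0 ∧ dotP a y ≠ 0 := by
  by_cases hx : x = 0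
  · have ha : a ≠ 0 := fun h0 => h 0 (by rw [h0, zero_smul])
    obtain ⟨i, hi⟩ := Function.ne_iff.mp ha
    simp only [Pi.zero_apply] at hi
    refine ⟨Pi.single i 1, by rw [hx, dotP_zero_left], ?_⟩
    rw [dotP_single_right]
    simpa using hi
  · obtain ⟨i, hi⟩ := Function.ne_iff.mp hx
    simp only [Pi.zero_apply] at hi
    have hj : ∃ j, x i * a j - x j * a i ≠ 0 := by
      by_contra hc
      push_neg at hc
      apply h (a i / x i)
      funext j
      have hcj := hc j
      show a j = a i / x i * x j
      rw [div_mul_eq_mul_div, eq_div_iff hi]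
      linear_combination hcj
    obtain ⟨j, hj⟩ := hj
    refine ⟨Pi.single j (x i) - Pi.single i (x j), ?_, ?_⟩
    · rw [dotP_sub_right, dotP_single_right, dotP_single_right]; ring
    · rw [dotP_sub_right, dotP_single_right, dotP_single_right]
      intro h0; apply hj; linear_combination h0

lemma orth_pair {m : ℕ} (hm : 2 ≤ m) {W : Type*} [AddCommGroup W] [Module K W]
    (α β : (Fin m → K) →ₗ[K] W) (hα : ∃ a, α a ≠ 0) (hβ : ∃ b, β b ≠ 0) :
    ∃ x y, dotP x y = 0 ∧ α x ≠ 0 ∧ β y ≠ 0 := by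
  obtain ⟨a, ha⟩ := hα
  obtain ⟨b, hb⟩ := hβ
  by_cases h1 : ∃ y, dotP a y = 0 ∧ β y ≠ 0
  · obtain ⟨y, hy1, hy2⟩ := h1
    exact ⟨a, y, hy1, ha, hy2⟩
  by_cases h2 : ∃ x, dotP x b = 0 ∧ α x ≠ 0
  · obtain ⟨x, hx1, hx2⟩ := h2
    exact ⟨x, b, hx1, hx2, hb⟩
  push_neg at h1 h2
  have hbne : b ≠ 0 := by intro h; apply hb; rw [h, map_zero]
  have hane : a ≠ 0 := by intro h; apply ha; rw [h, map_zero]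
  obtain ⟨p, hp⟩ := exists_dotP_eq hbne 1
  obtain ⟨q, hq⟩ := exists_dotP_eq hane 1
  have hαfac : ∀ z, α z = dotP z b • α p := by
    intro z
    have hz : dotP (z - dotP z b • p) b = 0 := by
      rw [dotP_sub_left, dotP_smul_left, hp, mul_one, sub_self]
    have h' := h2 _ hz
    rw [map_sub, map_smul] at h'
    exact sub_eq_zero.mp h'
  have hβfac : ∀ z, β z = dotP a z • β q := by
    intro z
    have hz : dotP a (z - dotP a z • q) = 0 := by
      rw [dotP_sub_right, dotP_smul_right, dotP_comm a q, hq, mul_one, sub_self]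
    have h' := h1 _ hz
    rw [map_sub, map_smul] at h'
    exact sub_eq_zero.mp h'
  have hαp : α p ≠ 0 := by
    intro h0; apply ha; rw [hαfac a, h0, smul_zero]
  have hβq : β q ≠ 0 := by
    intro h0; apply hb; rw [hβfac b, h0, smul_zero]
  obtain ⟨i, hbi⟩ := Function.ne_iff.mp hbne
  simp only [Pi.zero_apply] at hbi
  obtain ⟨j, hji⟩ := exists_ne_index hm i
  have key : ∃ x, dotP x b ≠ 0 ∧ ∀ c : K, a ≠ c • x := by
    by_cases hA1 : ∃ c : K, a = c • (Pi.single i 1 : Fin m → K)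
    · obtain ⟨c, hc⟩ := hA1
      have hc0 : c ≠ 0 := by intro h0; apply hane; rw [hc, h0, zero_smul]
      by_cases hbj : b j = 0
      · refine ⟨Pi.single i 1 + Pi.single j 1, ?_, ?_⟩
        · rw [dotP_add_left, dotP_single_left, dotP_single_left]
          simpa [hbj] using hbi
        · intro c' hc'
          have hcc := hc.symm.trans hc'
          have ej := congrFun hcc j
          have ei := congrFun hcc i
          simp [Pi.single_eq_same, Pi.single_eq_of_ne hji, Pi.single_eq_of_ne hji.symm] at ej ei
          exact hc0 (by rw [ei, ← ej])
      · refine ⟨Pi.single j 1, ?_, ?_⟩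
        · rw [dotP_single_left]; simpa using hbj
        · intro c' hc'
          have hcc := hc.symm.trans hc'
          have ei := congrFun hcc i
          simp [Pi.single_eq_same, Pi.single_eq_of_ne hji.symm] at ei
          exact hc0 ei
    · push_neg at hA1
      refine ⟨(Pi.single i 1 : Fin m → K), ?_, hA1⟩
      rw [dotP_single_left]; simpa using hbi
  obtain ⟨x, hxb, hxa⟩ := key
  obtain ⟨y, hxy, hay⟩ := perp_and_ne x a hxa
  refine ⟨x, y, hxy, ?_, ?_⟩
  · rw [hαfac x]; exact smul_ne_zero hxb hαp
  · rw [hβfac y]; exact smul_ne_zero hay hβq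

lemma cross_ne {m : ℕ} (hm : 2 ≤ m) (α β : (Fin m → K) →ₗ[K] (Fin 2 → K))
    (hsurj : ∀ t, ∃ x y, α x + β y = t)
    (hA : ∀ x x', epsd (α x) (α x') = 0) (hB : ∀ y y', epsd (β y) (β y') = 0) :
    ∃ x y, dotP x y = 0 ∧ epsd (α x) (β y) ≠ 0 := by
  have hα : ∃ a, α a ≠ 0 := by
    by_contra hc
    push_neg at hc
    obtain ⟨x1, y1, ht1⟩ := hsurj (Pi.single 0 1)
    obtain ⟨x2, y2, ht2⟩ := hsurj (Pi.single 1 1)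
    rw [hc x1, zero_add] at ht1
    rw [hc x2, zero_add] at ht2
    have := hB y1 y2
    rw [ht1, ht2] at this
    exact epsd_basis_ne this
  have hβ : ∃ b, β b ≠ 0 := by
    by_contra hc
    push_neg at hc
    obtain ⟨x1, y1, ht1⟩ := hsurj (Pi.single 0 1)
    obtain ⟨x2, y2, ht2⟩ := hsurj (Pi.single 1 1)
    rw [hc y1, add_zero] at ht1
    rw [hc y2, add_zero] at ht2
    have := hA x1 x2
    rw [ht1, ht2] at this
    exact epsd_basis_ne this
  obtain ⟨x, y, hxy, hax, hby⟩ := orth_pair hm α β hα hβ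
  refine ⟨x, y, hxy, fun h0 => hax ?_⟩
  apply epsd_all_zero
  intro t
  obtain ⟨z, w, rfl⟩ := hsurj t
  rw [epsd_add_right, hA x z, zero_add]
  obtain ⟨c, hc⟩ := exists_scalar hby (hB y w)
  rw [hc, epsd_smul_right, h0, mul_zero]

lemma core_hyp {m : ℕ} (hm : 2 ≤ m) (α β : (Fin m → K) →ₗ[K] (Fin 2 → K))
    (hsurj : ∀ t, ∃ x y, α x + β y = t) :
    ∃ x y x' y', dotP x y = 0 ∧ dotP x' y' = 0 ∧ dotP x y' + dotP x' y = 0 ∧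
      epsd (α x + β y) (α x' + β y') ≠ 0 := by
  by_cases hA : ∃ x x', epsd (α x) (α x') ≠ 0
  · obtain ⟨x, x', h⟩ := hA
    refine ⟨x, 0, x', 0, dotP_zero_right x, dotP_zero_right x', ?_, ?_⟩
    · rw [dotP_zero_right, dotP_zero_right, add_zero]
    · simpa only [map_zero, add_zero] using h
  by_cases hB : ∃ y y', epsd (β y) (β y') ≠ 0
  · obtain ⟨y, y', h⟩ := hB
    refine ⟨0, y, 0, y', dotP_zero_left y, dotP_zero_left y', ?_, ?_⟩
    · rw [dotP_zero_left, dotP_zero_left, add_zero]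
    · simpa only [map_zero, zero_add] using h
  push_neg at hA hB
  obtain ⟨x, y, hxy, h⟩ := cross_ne hm α β hsurj hA hB
  refine ⟨x, 0, 0, y, dotP_zero_right x, dotP_zero_left y, ?_, ?_⟩
  · rw [hxy, dotP_zero_left, add_zero]
  · simpa only [map_zero, add_zero, zero_add] using h

lemma core_par {m : ℕ} (hm : 2 ≤ m) (γ : Fin 2 → K) (α β : (Fin m → K) →ₗ[K] (Fin 2 → K))
    (hsurj : ∀ t, ∃ (c : K) (x y : Fin m → K), c • γ + α x + β y = t) :
    ∃ (c : K) (x y : Fin m → K) (c' : K) (x' y' : Fin m → K), c * c + dotP x y = 0 ∧ c' * c' + dotP x' y' = 0 ∧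
      2 * c * c' + dotP x y' + dotP x' y = 0 ∧
      epsd (c • γ + α x + β y) (c' • γ + α x' + β y') ≠ 0 := by
  by_cases hA : ∃ x x', epsd (α x) (α x') ≠ 0
  · obtain ⟨x, x', h⟩ := hA
    refine ⟨0, x, 0, 0, x', 0, ?_, ?_, ?_, ?_⟩
    · rw [dotP_zero_right]; ring
    · rw [dotP_zero_right]; ring
    · rw [dotP_zero_right, dotP_zero_right]; ring
    · simpa only [map_zero, add_zero, zero_smul, zero_add] using h
  by_cases hB : ∃ y y', epsd (β y) (β y') ≠ 0
  · obtain ⟨y, y', h⟩ := hB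
    refine ⟨0, 0, y, 0, 0, y', ?_, ?_, ?_, ?_⟩
    · rw [dotP_zero_left]; ring
    · rw [dotP_zero_left]; ring
    · rw [dotP_zero_left, dotP_zero_left]; ring
    · simpa only [map_zero, add_zero, zero_smul, zero_add] using h
  by_cases hC : ∃ x y', dotP x y' = 0 ∧ epsd (α x) (β y') ≠ 0
  · obtain ⟨x, y', hd, h⟩ := hC
    refine ⟨0, x, 0, 0, 0, y', ?_, ?_, ?_, ?_⟩
    · rw [dotP_zero_right]; ring
    · rw [dotP_zero_left]; ring
    · rw [hd, dotP_zero_left]; ring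
    · simpa only [map_zero, add_zero, zero_smul, zero_add] using h
  push_neg at hA hB hC
  by_cases hD1 : ∃ v, α v ≠ 0 ∧ epsd γ (α v) ≠ 0
  · obtain ⟨v, hv1, hv2⟩ := hD1
    have hvne : v ≠ 0 := by intro h; apply hv1; rw [h, map_zero]
    obtain ⟨ξ, hξne, hvξ⟩ := exists_perp hm v
    obtain ⟨u, huξ⟩ := exists_dotP_eq hξne (-1)
    refine ⟨1, u, ξ, 0, v, 0, ?_, ?_, ?_, ?_⟩
    · rw [huξ]; ring
    · rw [dotP_zero_right]; ring
    · rw [dotP_zero_right, hvξ]; ring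
    · simp only [zero_smul, map_zero, add_zero, zero_add, one_smul]
      rw [epsd_add_left, epsd_add_left, hA u v]
      have h3 : epsd (β ξ) (α v) = 0 := by
        rw [epsd_swap, hC v ξ hvξ, neg_zero]
      rw [h3]
      simpa using hv2
  by_cases hD2 : ∃ v, β v ≠ 0 ∧ epsd γ (β v) ≠ 0
  · obtain ⟨v, hv1, hv2⟩ := hD2
    have hvne : v ≠ 0 := by intro h; apply hv1; rw [h, map_zero]
    obtain ⟨u, hune, hvu⟩ := exists_perp hm v
    obtain ⟨ξ', hξ'⟩ := exists_dotP_eq hune (-1)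
    -- we need dotP u ξ = -1 with ξ := ξ', since dotP ξ' u = -1
    refine ⟨1, u, ξ', 0, 0, v, ?_, ?_, ?_, ?_⟩
    · rw [dotP_comm, hξ']; ring
    · rw [dotP_zero_left]; ring
    · rw [dotP_zero_left, dotP_comm, hvu]; ring
    · simp only [zero_smul, map_zero, add_zero, zero_add, one_smul]
      rw [epsd_add_left, epsd_add_left, hB ξ' v]
      have h2 : epsd (α u) (β v) = 0 := hC u v (by rw [dotP_comm]; exact hvu)
      rw [h2]
      simpa using hv2
  push_neg at hD1 hD2
  exfalso
  have hga : ∀ x, epsd γ (α x) = 0 := by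
    intro x
    by_cases h : α x = 0
    · rw [h, epsd_zero_right]
    · exact hD1 x h
  have hgb : ∀ y, epsd γ (β y) = 0 := by
    intro y
    by_cases h : β y = 0
    · rw [h, epsd_zero_right]
    · exact hD2 y h
  have hγ : γ = 0 := by
    apply epsd_all_zero
    intro t
    obtain ⟨c, x, y, rfl⟩ := hsurj t
    rw [epsd_add_right, epsd_add_right, epsd_smul_right, epsd_self, mul_zero, hga, hgb]
    ring
  have hsurj' : ∀ t, ∃ x y, α x + β y = t := by
    intro t
    obtain ⟨c, x, y, ht⟩ := hsurj t
    refine ⟨x, y, ?_⟩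
    rw [hγ, smul_zero, zero_add] at ht
    exact ht
  obtain ⟨x, y, hxy, h⟩ := cross_ne hm α β hsurj' hA hB
  exact h (hC x y hxy)

section Embeddings

variable (K : Type*) [Field K]

/-- Embedding of `K^m` into the even coordinates of `K^{2m}`. -/
def embEf (m : ℕ) (x : Fin m → K) : Fin (2 * m) → K :=
  fun j => if h : j.1 % 2 = 0 then x ⟨j.1 / 2, by omega⟩ else 0

/-- Embedding of `K^m` into the odd coordinates of `K^{2m}`. -/
def embOf (m : ℕ) (y : Fin m → K) : Fin (2 * m) → K :=
  fun j => if h : j.1 % 2 = 1 then y ⟨j.1 / 2, by omega⟩ else 0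

def embE (m : ℕ) : (Fin m → K) →ₗ[K] (Fin (2 * m) → K) where
  toFun := embEf K m
  map_add' x y := by
    funext j
    simp only [embEf, Pi.add_apply]
    split_ifs <;> simp
  map_smul' c x := by
    funext j
    simp only [embEf, Pi.smul_apply, RingHom.id_apply, smul_eq_mul]
    split_ifs <;> simp

def embO (m : ℕ) : (Fin m → K) →ₗ[K] (Fin (2 * m) → K) where
  toFun := embOf K m
  map_add' x y := by
    funext j
    simp only [embOf, Pi.add_apply]
    split_ifs <;> simp
  map_smul' c x := by
    funext j
    simp only [embOf, Pi.smul_apply, RingHom.id_apply, smul_eq_mul]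
    split_ifs <;> simp

variable {m : ℕ}

lemma embE_eval (x : Fin m → K) (j : Fin (2 * m)) (i : Fin m) (h : j.1 = 2 * i.1) :
    embE K m x j = x i := by
  show embEf K m x j = x i
  unfold embEf
  rw [dif_pos (by omega)]
  exact congrArg x (Fin.ext (by simp only [Fin.val_mk]; omega))

lemma embE_eval_odd (x : Fin m → K) (j : Fin (2 * m)) (h : j.1 % 2 = 1) :
    embE K m x j = 0 := by
  show embEf K m x j = 0
  unfold embEf
  rw [dif_neg (by omega)]

lemma embO_eval (y : Fin m → K) (j : Fin (2 * m)) (i : Fin m) (h : j.1 = 2 * i.1 + 1) :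
    embO K m y j = y i := by
  show embOf K m y j = y i
  unfold embOf
  rw [dif_pos (by omega)]
  exact congrArg y (Fin.ext (by simp only [Fin.val_mk]; omega))

lemma embO_eval_even (y : Fin m → K) (j : Fin (2 * m)) (h : j.1 % 2 = 0) :
    embO K m y j = 0 := by
  show embOf K m y j = 0
  unfold embOf
  rw [dif_neg (by omega)]

lemma emb_decomp (v : Fin (2 * m) → K) :
    embE K m (fun i => v ⟨2 * i.1, by omega⟩) + embO K m (fun i => v ⟨2 * i.1 + 1, by omega⟩)
      = v := by
  funext j
  rw [Pi.add_apply]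
  by_cases h : j.1 % 2 = 0
  · rw [embE_eval K _ j ⟨j.1 / 2, by omega⟩ (by simp only [Fin.val_mk]; omega),
      embO_eval_even K _ j h, add_zero]
    exact congrArg v (Fin.ext (by simp only [Fin.val_mk]; omega))
  · rw [embE_eval_odd K _ j (by omega),
      embO_eval K _ j ⟨j.1 / 2, by omega⟩ (by simp only [Fin.val_mk]; omega), zero_add]
    exact congrArg v (Fin.ext (by simp only [Fin.val_mk]; omega))

/-- Parabolic versions, in `K^{2m+1}`: coordinate `0`, odd coordinates, even ≥ 2. -/
def deltaV (m : ℕ) : Fin (2 * m + 1) → K := fun j => if j.1 = 0 then 1 else 0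

def embEpf (m : ℕ) (x : Fin m → K) : Fin (2 * m + 1) → K :=
  fun j => if h : j.1 % 2 = 1 then x ⟨j.1 / 2, by omega⟩ else 0

def embOpf (m : ℕ) (y : Fin m → K) : Fin (2 * m + 1) → K :=
  fun j => if h : j.1 % 2 = 0 ∧ j.1 ≠ 0 then y ⟨j.1 / 2 - 1, by omega⟩ else 0

def embEp (m : ℕ) : (Fin m → K) →ₗ[K] (Fin (2 * m + 1) → K) where
  toFun := embEpf K m
  map_add' x y := by
    funext j
    simp only [embEpf, Pi.add_apply]
    split_ifs <;> simp
  map_smul' c x := by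
    funext j
    simp only [embEpf, Pi.smul_apply, RingHom.id_apply, smul_eq_mul]
    split_ifs <;> simp

def embOp (m : ℕ) : (Fin m → K) →ₗ[K] (Fin (2 * m + 1) → K) where
  toFun := embOpf K m
  map_add' x y := by
    funext j
    simp only [embOpf, Pi.add_apply]
    split_ifs <;> simp
  map_smul' c x := by
    funext j
    simp only [embOpf, Pi.smul_apply, RingHom.id_apply, smul_eq_mul]
    split_ifs <;> simp

lemma deltaV_eval_zero (j : Fin (2 * m + 1)) (h : j.1 = 0) : deltaV K m j = 1 := if_pos h

lemma deltaV_eval_ne (j : Fin (2 * m + 1)) (h : j.1 ≠ 0) : deltaV K m j = 0 := if_neg h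

lemma embEp_eval (x : Fin m → K) (j : Fin (2 * m + 1)) (i : Fin m) (h : j.1 = 2 * i.1 + 1) :
    embEp K m x j = x i := by
  show embEpf K m x j = x i
  unfold embEpf
  rw [dif_pos (by omega)]
  exact congrArg x (Fin.ext (by simp only [Fin.val_mk]; omega))

lemma embEp_eval_even (x : Fin m → K) (j : Fin (2 * m + 1)) (h : j.1 % 2 = 0) :
    embEp K m x j = 0 := by
  show embEpf K m x j = 0
  unfold embEpf
  rw [dif_neg (by omega)]

lemma embOp_eval (y : Fin m → K) (j : Fin (2 * m + 1)) (i : Fin m) (h : j.1 = 2 * i.1 + 2) :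
    embOp K m y j = y i := by
  show embOpf K m y j = y i
  unfold embOpf
  rw [dif_pos (by omega)]
  exact congrArg y (Fin.ext (by simp only [Fin.val_mk]; omega))

lemma embOp_eval_other (y : Fin m → K) (j : Fin (2 * m + 1)) (h : ¬(j.1 % 2 = 0 ∧ j.1 ≠ 0)) :
    embOp K m y j = 0 := by
  show embOpf K m y j = 0
  unfold embOpf
  rw [dif_neg h]

lemma emb_decomp' (v : Fin (2 * m + 1) → K) :
    v 0 • deltaV K m + embEp K m (fun i => v ⟨2 * i.1 + 1, by omega⟩)
      + embOp K m (fun i => v ⟨2 * i.1 + 2, by omega⟩) = v := by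
  funext j
  rw [Pi.add_apply, Pi.add_apply, Pi.smul_apply, smul_eq_mul]
  by_cases h0 : j.1 = 0
  · rw [deltaV_eval_zero K j h0, embEp_eval_even K _ j (by omega),
      embOp_eval_other K _ j (by omega)]
    have hj : j = 0 := Fin.ext (by simpa using h0)
    rw [hj]
    ring
  by_cases h1 : j.1 % 2 = 1
  · rw [deltaV_eval_ne K j h0, embEp_eval K _ j ⟨j.1 / 2, by omega⟩
      (by simp only [Fin.val_mk]; omega), embOp_eval_other K _ j (by omega)]
    rw [mul_zero, zero_add, add_zero]
    exact congrArg v (Fin.ext (by simp only [Fin.val_mk]; omega))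
  · have hmm : j.1 % 2 = 0 := by omega
    have harg : j.1 = 2 * (j.1 / 2 - 1) + 2 := by omega
    rw [deltaV_eval_ne K j h0, embEp_eval_even K _ j hmm,
      embOp_eval K _ j ⟨j.1 / 2 - 1, by omega⟩ harg]
    simp only [mul_zero, zero_add]
    exact congrArg v (Fin.ext (by simp only [Fin.val_mk]; omega))

end Embeddings

end MMsetAux


namespace MMset

open MMsetAux in
private lemma hypForm_emb {K : Type*} [Field K] {m : ℕ} (x y : Fin m → K) :
    hypForm K m (embE K m x + embO K m y) = dotP x y := by
  unfold hypForm dotP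
  refine Finset.sum_congr rfl fun i _ => ?_
  simp only [Pi.add_apply]
  rw [embE_eval K x ⟨2 * i.1, by omega⟩ i rfl,
    embO_eval_even K y ⟨2 * i.1, by omega⟩ (show 2 * i.1 % 2 = 0 by omega),
    embE_eval_odd K x ⟨2 * i.1 + 1, by omega⟩ (show (2 * i.1 + 1) % 2 = 1 by omega),
    embO_eval K y ⟨2 * i.1 + 1, by omega⟩ i rfl]
  ring

open MMsetAux in
private lemma parForm_emb {K : Type*} [Field K] {m : ℕ} (c : K) (x y : Fin m → K) :
    parForm K m (c • deltaV K m + embEp K m x + embOp K m y) = c * c + dotP x y := by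
  unfold parForm dotP
  have h0 : (c • deltaV K m + embEp K m x + embOp K m y) 0 = c := by
    simp only [Pi.add_apply, Pi.smul_apply, smul_eq_mul]
    rw [deltaV_eval_zero K 0 (by simp), embEp_eval_even K x 0 (by simp),
      embOp_eval_other K y 0 (by simp)]
    ring
  rw [h0]
  congr 1
  refine Finset.sum_congr rfl fun i _ => ?_
  simp only [Pi.add_apply, Pi.smul_apply, smul_eq_mul]
  rw [deltaV_eval_ne K ⟨2 * i.1 + 1, by omega⟩ (show 2 * i.1 + 1 ≠ 0 by omega),
    embEp_eval K x ⟨2 * i.1 + 1, by omega⟩ i rfl,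
    embOp_eval_other K y ⟨2 * i.1 + 1, by omega⟩
      (show ¬((2 * i.1 + 1) % 2 = 0 ∧ 2 * i.1 + 1 ≠ 0) by omega),
    deltaV_eval_ne K ⟨2 * i.1 + 2, by omega⟩ (show 2 * i.1 + 2 ≠ 0 by omega),
    embEp_eval_even K x ⟨2 * i.1 + 2, by omega⟩ (show (2 * i.1 + 2) % 2 = 0 by omega),
    embOp_eval K y ⟨2 * i.1 + 2, by omega⟩ i rfl]
  ring

open MMsetAux in
private lemma hyp_part {K : Type*} [Field K] {m : ℕ} (hm : 2 ≤ m)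
    (S : Submodule K (Fin (2 * m) → K)) (hS : Module.finrank K ↥S = 2 * m - 2) :
    ∃ L : Submodule K (Fin (2 * m) → K), Module.finrank K ↥L = 2 ∧
      projPts L ⊆ hypQuadric K m ∧ L ⊓ S = ⊥ := by
  classical
  have hq2 : Module.finrank K ((Fin (2 * m) → K) ⧸ S) = 2 := by
    have h1 := Submodule.finrank_quotient_add_finrank S
    rw [Module.finrank_fin_fun, hS] at h1
    omega
  let e : ((Fin (2 * m) → K) ⧸ S) ≃ₗ[K] (Fin 2 → K) :=
    LinearEquiv.ofFinrankEq _ _ (by rw [hq2, Module.finrank_fin_fun])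
  let φ : (Fin (2 * m) → K) →ₗ[K] (Fin 2 → K) := e.toLinearMap ∘ₗ S.mkQ
  have hker : ∀ w, φ w = 0 ↔ w ∈ S := by
    intro w
    constructor
    · intro h
      have h2 : S.mkQ w = 0 := by
        apply e.injective
        simpa [φ] using h
      rw [Submodule.mkQ_apply, Submodule.Quotient.mk_eq_zero] at h2
      exact h2
    · intro h
      have h2 : S.mkQ w = 0 := by
        rw [Submodule.mkQ_apply, Submodule.Quotient.mk_eq_zero]
        exact h
      simp [φ, h2]
  have hsurjφ : ∀ t, ∃ w, φ w = t := by
    intro t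
    obtain ⟨qq, hqq⟩ := e.surjective t
    obtain ⟨w, hw⟩ := Submodule.mkQ_surjective S qq
    exact ⟨w, by simp [φ, hw, hqq]⟩
  set α := φ ∘ₗ embE K m with hαdef
  set β := φ ∘ₗ embO K m with hβdef
  have hsurj : ∀ t, ∃ x y, α x + β y = t := by
    intro t
    obtain ⟨w, hw⟩ := hsurjφ t
    refine ⟨fun i => w ⟨2 * i.1, by omega⟩, fun i => w ⟨2 * i.1 + 1, by omega⟩, ?_⟩
    rw [hαdef, hβdef]
    show φ (embE K m _) + φ (embO K m _) = t
    rw [← map_add φ, emb_decomp K w]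
    exact hw
  obtain ⟨x, y, x', y', h1, h2, h3, heps⟩ := core_hyp hm α β hsurj
  set u := embE K m x + embO K m y with hu
  set v := embE K m x' + embO K m y' with hv
  have hφu : φ u = α x + β y := by rw [hu, map_add, hαdef, hβdef]; rfl
  have hφv : φ v = α x' + β y' := by rw [hv, map_add, hαdef, hβdef]; rfl
  have hepsuv : epsd (φ u) (φ v) ≠ 0 := by rw [hφu, hφv]; exact heps
  have hind : ∀ a b : K, a • u + b • v = 0 → a = 0 ∧ b = 0 := by
    intro a b hab
    have h0 : a • φ u + b • φ v = 0 := by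
      rw [← map_smul, ← map_smul, ← map_add, hab, map_zero]
    exact indep_of_epsd hepsuv a b h0
  have hcomb : ∀ a b : K, a • u + b • v =
      embE K m (a • x + b • x') + embO K m (a • y + b • y') := by
    intro a b
    rw [hu, hv, map_add, map_add, map_smul, map_smul, map_smul, map_smul]
    simp only [smul_add]
    abel
  refine ⟨Submodule.span K {u, v}, ?_, ?_, ?_⟩
  · have hli : LinearIndependent K ![u, v] :=
      LinearIndependent.pair_iff.mpr fun s t h => hind s t h
    have hset : ({u, v} : Set (Fin (2 * m) → K)) = Set.range ![u, v] := by
      ext z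
      simp only [Set.mem_insert_iff, Set.mem_singleton_iff, Set.mem_range,
        Fin.exists_fin_two, Matrix.cons_val_zero, Matrix.cons_val_one, Matrix.head_cons]
      constructor
      · rintro (rfl | rfl) <;> [exact Or.inl rfl; exact Or.inr rfl]
      · rintro (rfl | rfl) <;> [exact Or.inl rfl; exact Or.inr rfl]
    rw [hset, finrank_span_eq_card hli]
    simp
  · intro p hp
    obtain ⟨a, b, hab⟩ := Submodule.mem_span_pair.mp hp
    show hypForm K m p.rep = 0
    rw [← hab, hcomb, hypForm_emb, dotP_expand]
    linear_combination (a * a) * h1 + (b * b) * h2 + (a * b) * h3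
  · rw [Submodule.eq_bot_iff]
    intro z hz
    rw [Submodule.mem_inf] at hz
    obtain ⟨a, b, hab⟩ := Submodule.mem_span_pair.mp hz.1
    have hφz : φ z = 0 := (hker z).mpr hz.2
    have h0 : a • φ u + b • φ v = 0 := by
      rw [← map_smul, ← map_smul, ← map_add, hab, hφz]
    obtain ⟨ha, hb⟩ := indep_of_epsd hepsuv a b h0
    rw [← hab, ha, hb, zero_smul, zero_smul, add_zero]

open MMsetAux in
private lemma par_part {K : Type*} [Field K] {m : ℕ} (hm : 2 ≤ m)
    (S : Submodule K (Fin (2 * m + 1) → K)) (hS : Module.finrank K ↥S = 2 * m - 1) :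
    ∃ L : Submodule K (Fin (2 * m + 1) → K), Module.finrank K ↥L = 2 ∧
      projPts L ⊆ parQuadric K m ∧ L ⊓ S = ⊥ := by
  classical
  have hq2 : Module.finrank K ((Fin (2 * m + 1) → K) ⧸ S) = 2 := by
    have h1 := Submodule.finrank_quotient_add_finrank S
    rw [Module.finrank_fin_fun, hS] at h1
    omega
  let e : ((Fin (2 * m + 1) → K) ⧸ S) ≃ₗ[K] (Fin 2 → K) :=
    LinearEquiv.ofFinrankEq _ _ (by rw [hq2, Module.finrank_fin_fun])
  let φ : (Fin (2 * m + 1) → K) →ₗ[K] (Fin 2 → K) := e.toLinearMap ∘ₗ S.mkQ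
  have hker : ∀ w, φ w = 0 ↔ w ∈ S := by
    intro w
    constructor
    · intro h
      have h2 : S.mkQ w = 0 := by
        apply e.injective
        simpa [φ] using h
      rw [Submodule.mkQ_apply, Submodule.Quotient.mk_eq_zero] at h2
      exact h2
    · intro h
      have h2 : S.mkQ w = 0 := by
        rw [Submodule.mkQ_apply, Submodule.Quotient.mk_eq_zero]
        exact h
      simp [φ, h2]
  have hsurjφ : ∀ t, ∃ w, φ w = t := by
    intro t
    obtain ⟨qq, hqq⟩ := e.surjective t
    obtain ⟨w, hw⟩ := Submodule.mkQ_surjective S qq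
    exact ⟨w, by simp [φ, hw, hqq]⟩
  set γ := φ (deltaV K m) with hγdef
  set α := φ ∘ₗ embEp K m with hαdef
  set β := φ ∘ₗ embOp K m with hβdef
  have hsurj : ∀ t, ∃ (c : K) (x y : Fin m → K), c • γ + α x + β y = t := by
    intro t
    obtain ⟨w, hw⟩ := hsurjφ t
    refine ⟨w 0, fun i => w ⟨2 * i.1 + 1, by omega⟩, fun i => w ⟨2 * i.1 + 2, by omega⟩, ?_⟩
    rw [hγdef, hαdef, hβdef]
    show w 0 • φ (deltaV K m) + φ (embEp K m _) + φ (embOp K m _) = t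
    rw [← map_smul φ, ← map_add φ, ← map_add φ, emb_decomp' K w]
    exact hw
  obtain ⟨c, x, y, c', x', y', h1, h2, h3, heps⟩ := core_par hm γ α β hsurj
  set u := c • deltaV K m + embEp K m x + embOp K m y with hu
  set v := c' • deltaV K m + embEp K m x' + embOp K m y' with hv
  have hφu : φ u = c • γ + α x + β y := by
    rw [hu, map_add, map_add, map_smul, hγdef, hαdef, hβdef]; rfl
  have hφv : φ v = c' • γ + α x' + β y' := by
    rw [hv, map_add, map_add, map_smul, hγdef, hαdef, hβdef]; rfl
  have hepsuv : epsd (φ u) (φ v) ≠ 0 := by rw [hφu, hφv]; exact heps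
  have hind : ∀ a b : K, a • u + b • v = 0 → a = 0 ∧ b = 0 := by
    intro a b hab
    have h0 : a • φ u + b • φ v = 0 := by
      rw [← map_smul, ← map_smul, ← map_add, hab, map_zero]
    exact indep_of_epsd hepsuv a b h0
  have hcomb : ∀ a b : K, a • u + b • v =
      (a * c + b * c') • deltaV K m + embEp K m (a • x + b • x')
        + embOp K m (a • y + b • y') := by
    intro a b
    rw [hu, hv]
    simp only [map_add, map_smul, smul_add, smul_smul, add_smul]
    abel
  refine ⟨Submodule.span K {u, v}, ?_, ?_, ?_⟩
  · have hli : LinearIndependent K ![u, v] :=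
      LinearIndependent.pair_iff.mpr fun s t h => hind s t h
    have hset : ({u, v} : Set (Fin (2 * m + 1) → K)) = Set.range ![u, v] := by
      ext z
      simp only [Set.mem_insert_iff, Set.mem_singleton_iff, Set.mem_range,
        Fin.exists_fin_two, Matrix.cons_val_zero, Matrix.cons_val_one, Matrix.head_cons]
      constructor
      · rintro (rfl | rfl) <;> [exact Or.inl rfl; exact Or.inr rfl]
      · rintro (rfl | rfl) <;> [exact Or.inl rfl; exact Or.inr rfl]
    rw [hset, finrank_span_eq_card hli]
    simp
  · intro p hp
    obtain ⟨a, b, hab⟩ := Submodule.mem_span_pair.mp hp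
    show parForm K m p.rep = 0
    rw [← hab, hcomb, parForm_emb, dotP_expand]
    linear_combination (a * a) * h1 + (b * b) * h2 + (a * b) * h3
  · rw [Submodule.eq_bot_iff]
    intro z hz
    rw [Submodule.mem_inf] at hz
    obtain ⟨a, b, hab⟩ := Submodule.mem_span_pair.mp hz.1
    have hφz : φ z = 0 := (hker z).mpr hz.2
    have h0 : a • φ u + b • φ v = 0 := by
      rw [← map_smul, ← map_smul, ← map_add, hab, hφz]
    obtain ⟨ha, hb⟩ := indep_of_epsd hepsuv a b h0
    rw [← hab, ha, hb, zero_smul, zero_smul, add_zero]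

end MMset

namespace MMset

open scoped LinearAlgebra.Projectivization


/-- Let `Q` be a hyperbolic or parabolic quadric in `ℙ^n(K)`, `n ≥ 3`, and let `S`
be a projective subspace of dimension `n - 2` (linear dimension `n - 1`).  Then
some line entirely contained in `Q` does not intersect `S`.  (Hyperbolic case:
`n = 2m - 1`; parabolic case: `n = 2m`; in both cases `n ≥ 3` iff `m ≥ 2`.) -/
theorem line_avoiding_codim_two {K : Type*} [Field K] (m : ℕ) (hm : 2 ≤ m) :
    (∀ S : Submodule K (Fin (2 * m) → K), Module.finrank K ↥S = 2 * m - 2 →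
      ∃ L : Submodule K (Fin (2 * m) → K), Module.finrank K ↥L = 2 ∧
        projPts L ⊆ hypQuadric K m ∧ L ⊓ S = ⊥) ∧
    (∀ S : Submodule K (Fin (2 * m + 1) → K), Module.finrank K ↥S = 2 * m - 1 →
      ∃ L : Submodule K (Fin (2 * m + 1) → K), Module.finrank K ↥L = 2 ∧
        projPts L ⊆ parQuadric K m ∧ L ⊓ S = ⊥) :=
  ⟨fun S hS => hyp_part hm S hS, fun S hS => par_part hm S hS⟩

end MMset
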